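/- arXiv:1803.07543 — 3 statements merged into one kernel-verified Lean document; each statement's English description precedes it below -/
import Mathlib

section
/- Axiom 1 of iALC is valid: in every iALC interpretation (with ≼ reflexive and transitive, and concept interpretations upward-closed), every element of Δ belongs to the interpretation of ∀R.(C ⊑ D) ⊑ (∀R.C ⊑ ∀R.D). -/
/-- iALC subsumption concept: (C ⊑ D)^I -/
def Subs {W : Type} (le : W → W → Prop) (C D : Set W) : Set W :=
  {x | ∀ y, le x y → y ∈ C → y ∈ D}

/-- iALC universal restriction: (∀R.C)^I -/
def AllR {W : Type} (le : W → W → Prop) (R : W → W → Prop) (C : Set W) : Set W :=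
  {x | ∀ y, le x y → ∀ z, R y z → z ∈ C}

theorem axiom1_valid {W : Type} [Nonempty W]
    (le : W → W → Prop) (hrefl : Reflexive le) (htrans : Transitive le)
    (R : W → W → Prop) (C D : Set W)
    (hC : ∀ x y, x ∈ C → le x y → y ∈ C) (hD : ∀ x y, x ∈ D → le x y → y ∈ D) :
    ∀ x : W, x ∈ Subs le (AllR le R (Subs le C D)) (Subs le (AllR le R C) (AllR le R D)) := by
  intro x y _ hy z hz hzC w hw v hv
  exact hy w (htrans hz hw) v hv v (hrefl v) (hzC w hw v hv)
end

section
/- Axiom 5 of iALC is valid in interpretations satisfying frame conditions F1 and F2: every element of Δ belongs to the interpretation of (∃R.C ⊑ ∀R.D) ⊑ ∀R.(C ⊑ D). -/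
def ExR {W : Type} (R : W → W → Prop) (C : Set W) : Set W :=
  {x | ∃ y, R x y ∧ y ∈ C}

theorem axiom5_valid {W : Type} [Nonempty W]
    (le : W → W → Prop) (hrefl : Reflexive le) (htrans : Transitive le)
    (R : W → W → Prop)
    (hF1 : ∀ w w' v, le w w' → R w v → ∃ v', R w' v' ∧ le v v')
    (hF2 : ∀ w v v', le v v' → R w v → ∃ w', R w' v' ∧ le w w')
    (C D : Set W)
    (hC : ∀ x y, x ∈ C → le x y → y ∈ C) (hD : ∀ x y, x ∈ D → le x y → y ∈ D) :
    ∀ x : W, x ∈ Subs le (Subs le (ExR R C) (AllR le R D)) (AllR le R (Subs le C D)) := by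
  intro x y hxy hy y' hyy' z hRz z' hzz' hz'C
  obtain ⟨w', hRw', hy'w'⟩ := hF2 y' z z' hzz' hRz
  exact hy w' (htrans hyy' hy'w') ⟨z', hRw', hz'C⟩ w' (hrefl w') z' hRw'
end

section
/- The free choice permission principle trivializes permission in SDL: in any normal modal logic extending K with the axiom scheme P(φ ∨ ψ) → (P(φ) ∧ P(ψ)) where P(φ) := ¬O(¬φ), the formula P(p) → P(q) is derivable for all p, q. -/
inductive Fm : Type
  | atom : ℕ → Fm
  | bot : Fm
  | impl : Fm → Fm → Fm
  | and : Fm → Fm → Fm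
  | or : Fm → Fm → Fm
  | ob : Fm → Fm

def Fm.neg (φ : Fm) : Fm := Fm.impl φ Fm.bot

/-- Permission: P(φ) := ¬O(¬φ). -/
def Fm.perm (φ : Fm) : Fm := Fm.neg (Fm.ob (Fm.neg φ))

/-- Provability in normal modal logic K (over classical propositional logic)
extended with the free choice permission scheme P(φ ∨ ψ) → P(φ) ∧ P(ψ). -/
inductive Prov : Fm → Prop
  | ax1 (φ ψ : Fm) : Prov (.impl φ (.impl ψ φ))
  | ax2 (φ ψ χ : Fm) :
      Prov (.impl (.impl φ (.impl ψ χ)) (.impl (.impl φ ψ) (.impl φ χ)))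
  | dne (φ : Fm) : Prov (.impl (Fm.neg (Fm.neg φ)) φ)
  | andI (φ ψ : Fm) : Prov (.impl φ (.impl ψ (.and φ ψ)))
  | andE1 (φ ψ : Fm) : Prov (.impl (.and φ ψ) φ)
  | andE2 (φ ψ : Fm) : Prov (.impl (.and φ ψ) ψ)
  | orI1 (φ ψ : Fm) : Prov (.impl φ (.or φ ψ))
  | orI2 (φ ψ : Fm) : Prov (.impl ψ (.or φ ψ))
  | orE (φ ψ χ : Fm) :
      Prov (.impl (.impl φ χ) (.impl (.impl ψ χ) (.impl (.or φ ψ) χ)))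
  | botE (φ : Fm) : Prov (.impl .bot φ)
  | K (φ ψ : Fm) : Prov (.impl (.ob (.impl φ ψ)) (.impl (.ob φ) (.ob ψ)))
  | mp {φ ψ : Fm} : Prov (.impl φ ψ) → Prov φ → Prov ψ
  | nec {φ : Fm} : Prov φ → Prov (.ob φ)
  | fcp (φ ψ : Fm) :
      Prov (.impl (Fm.perm (.or φ ψ)) (.and (Fm.perm φ) (Fm.perm ψ)))

/-- Meta-level transitivity of implication. -/
theorem Prov.trans {φ ψ χ : Fm} (a : Prov (.impl φ ψ)) (b : Prov (.impl ψ χ)) :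
    Prov (.impl φ χ) :=
  Prov.mp (Prov.mp (Prov.ax2 φ ψ χ) (Prov.mp (Prov.ax1 (.impl ψ χ) φ) b)) a

/-- Internal contraposition from a provable implication. -/
theorem Prov.contra {Y X : Fm} (h : Prov (.impl Y X)) :
    Prov (.impl (Fm.neg X) (Fm.neg Y)) := by
  have s1 : Prov (.impl (Fm.neg X) (.impl Y X)) :=
    Prov.mp (Prov.ax1 (.impl Y X) (Fm.neg X)) h
  have s2 : Prov (.impl (Fm.neg X) (.impl Y (Fm.neg X))) :=
    Prov.ax1 (Fm.neg X) Y
  have t : Prov (.impl (Fm.neg X) (.impl (.impl Y X) (.impl Y .bot))) :=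
    Prov.trans s2 (Prov.ax2 Y X .bot)
  exact Prov.mp (Prov.mp (Prov.ax2 (Fm.neg X) (.impl Y X) (.impl Y .bot)) t) s1

/-- Free choice permission trivializes permission: ⊢ P(p) → P(q). -/
theorem fcp_trivializes_permission (p q : ℕ) :
    Prov (.impl (Fm.perm (.atom p)) (Fm.perm (.atom q))) := by
  set P : Fm := .atom p
  set Q : Fm := .atom q
  -- ⊢ ¬(P∨Q) → ¬P
  have h1 : Prov (.impl (Fm.neg (.or P Q)) (Fm.neg P)) :=
    Prov.contra (Prov.orI1 P Q)
  -- ⊢ O¬(P∨Q) → O¬P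
  have h2 : Prov (.impl (.ob (Fm.neg (.or P Q))) (.ob (Fm.neg P))) :=
    Prov.mp (Prov.K _ _) (Prov.nec h1)
  -- ⊢ P(P) → P(P∨Q)
  have h3 : Prov (.impl (Fm.perm P) (Fm.perm (.or P Q))) := Prov.contra h2
  exact Prov.trans (Prov.trans h3 (Prov.fcp P Q)) (Prov.andE2 _ _)
end
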